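/- arXiv:math/0411100 — 3 statements merged into one kernel-verified Lean document; each statement's English description precedes it below -/
import Mathlib

section
/- Along any solution (u,v) of the geodesic equations u'' = 2u(u')²/(u²+v²), v'' = 2v(v')²/(u²+v²) with u²+v² ≠ 0, the quantity u'·v'/(u²+v²) is constant (its derivative vanishes identically). -/
/-!
By the quotient rule, the derivative of `u'v'/(u²+v²)` has numerator
`(u''v' + u'v'')(u²+v²) - 2u'v'(uu' + vv')`. The geodesic equations say exactly that
`u''(u²+v²) = 2uu'²` and `v''(u²+v²) = 2vv'²`, so the first product equals the second.
-/

section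

variable {𝕜 𝕜' : Type*} [NontriviallyNormedField 𝕜] [NontriviallyNormedField 𝕜']
  [NormedAlgebra 𝕜 𝕜']

theorem HasDerivAt.sq_add_sq {u v : 𝕜 → 𝕜'} {du dv : 𝕜'} {t : 𝕜}
    (hu : HasDerivAt u du t) (hv : HasDerivAt v dv t) :
    HasDerivAt (fun s => u s ^ 2 + v s ^ 2) (2 * (u t * du + v t * dv)) t :=
  ((hu.fun_pow 2).fun_add (hv.fun_pow 2)).congr_deriv (by norm_num; ring)

theorem HasDerivAt.mul_div_sq_add_sq {u v u' v' : 𝕜 → 𝕜'} {du dv du' dv' : 𝕜'} {t : 𝕜}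
    (hu : HasDerivAt u du t) (hv : HasDerivAt v dv t)
    (hu' : HasDerivAt u' du' t) (hv' : HasDerivAt v' dv' t) (hne : u t ^ 2 + v t ^ 2 ≠ 0) :
    HasDerivAt (fun s => u' s * v' s / (u s ^ 2 + v s ^ 2))
      (((du' * v' t + u' t * dv') * (u t ^ 2 + v t ^ 2)
        - u' t * v' t * (2 * (u t * du + v t * dv))) / (u t ^ 2 + v t ^ 2) ^ 2) t :=
  (hu'.mul hv').fun_div (hu.sq_add_sq hv) hne

end

theorem cliftonPohl_quotient_numerator_eq_zero {K : Type*} [Field K] {u v u' v' u'' v'' : K}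
    (hne : u ^ 2 + v ^ 2 ≠ 0)
    (geo_u : u'' = 2 * u * u' ^ 2 / (u ^ 2 + v ^ 2))
    (geo_v : v'' = 2 * v * v' ^ 2 / (u ^ 2 + v ^ 2)) :
    (u'' * v' + u' * v'') * (u ^ 2 + v ^ 2) - u' * v' * (2 * (u * u' + v * v')) = 0 := by
  subst geo_u geo_v
  field_simp
  ring

/-- Along any solution of the Clifton-Pohl geodesic system with `u²+v² ≠ 0`,
the quantity `u'·v'/(u²+v²)` is constant: its derivative vanishes identically. -/
theorem cliftonPohl_first_integral_A
    (u v u' v' u'' v'' : ℝ → ℂ)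
    (hu : ∀ t, HasDerivAt u (u' t) t) (hv : ∀ t, HasDerivAt v (v' t) t)
    (hu' : ∀ t, HasDerivAt u' (u'' t) t) (hv' : ∀ t, HasDerivAt v' (v'' t) t)
    (hne : ∀ t, u t ^ 2 + v t ^ 2 ≠ 0)
    (geo_u : ∀ t, u'' t = 2 * u t * (u' t) ^ 2 / (u t ^ 2 + v t ^ 2))
    (geo_v : ∀ t, v'' t = 2 * v t * (v' t) ^ 2 / (u t ^ 2 + v t ^ 2)) :
    ∀ t, HasDerivAt (fun s => u' s * v' s / (u s ^ 2 + v s ^ 2)) 0 t := by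
  intro t
  have h := (hu t).mul_div_sq_add_sq (hv t) (hu' t) (hv' t) (hne t)
  rwa [cliftonPohl_quotient_numerator_eq_zero (hne t) (geo_u t) (geo_v t), zero_div] at h
end

section
/- Along any solution (u,v) of the geodesic equations u'' = 2u(u')²/(u²+v²), v'' = 2v(v')²/(u²+v²) with u'·v' never zero, the quantity u/u' + v/v' is constant. -/
/-!
Write `N = u² + v²`. By the quotient rule `(u/u')' = 1 - u u''/u'²`, and the geodesic equation
turns `u u''/u'²` into `2u²/N`; likewise for `v`. The derivative of `u/u' + v/v'` is therefore
`2 - 2(u² + v²)/N = 0`.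
-/

theorem HasDerivAt.div_deriv {𝕜 𝕜' : Type*} [NontriviallyNormedField 𝕜]
    [NontriviallyNormedField 𝕜'] [NormedAlgebra 𝕜 𝕜'] {f f' : 𝕜 → 𝕜'} {f'' : 𝕜'} {x : 𝕜}
    (hf : HasDerivAt f (f' x) x) (hf' : HasDerivAt f' f'' x) (hx : f' x ≠ 0) :
    HasDerivAt (fun s => f s / f' s) (1 - f x * f'' / f' x ^ 2) x :=
  (hf.div hf' hx).congr_deriv (by field_simp)

theorem mul_div_sq_of_geodesic {𝕜 : Type*} [Field 𝕜] {f f' f'' N : 𝕜} (hf' : f' ≠ 0)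
    (hgeo : f'' = 2 * f * f' ^ 2 / N) :
    f * f'' / f' ^ 2 = 2 * f ^ 2 / N := by
  rw [hgeo]
  field_simp

/-- Along any solution of the Clifton-Pohl geodesic system with `u'·v'` never zero,
the quantity `u/u' + v/v'` is constant: its derivative vanishes identically. -/
theorem cliftonPohl_first_integral_B
    (u v u' v' u'' v'' : ℝ → ℂ)
    (hu : ∀ t, HasDerivAt u (u' t) t) (hv : ∀ t, HasDerivAt v (v' t) t)
    (hu' : ∀ t, HasDerivAt u' (u'' t) t) (hv' : ∀ t, HasDerivAt v' (v'' t) t)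
    (hne : ∀ t, u t ^ 2 + v t ^ 2 ≠ 0)
    (hu'ne : ∀ t, u' t ≠ 0) (hv'ne : ∀ t, v' t ≠ 0)
    (geo_u : ∀ t, u'' t = 2 * u t * (u' t) ^ 2 / (u t ^ 2 + v t ^ 2))
    (geo_v : ∀ t, v'' t = 2 * v t * (v' t) ^ 2 / (u t ^ 2 + v t ^ 2)) :
    ∀ t, HasDerivAt (fun s => u s / u' s + v s / v' s) 0 t := by
  intro t
  refine ((hu t).div_deriv (hu' t) (hu'ne t)).add ((hv t).div_deriv (hv' t) (hv'ne t))
    |>.congr_deriv ?_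
  rw [mul_div_sq_of_geodesic (hu'ne t) (geo_u t), mul_div_sq_of_geodesic (hv'ne t) (geo_v t)]
  field_simp [hne t]
  ring
end

section
/- Let (u,v) be a solution of the geodesic system with u, v never zero, satisfying u·v' = v·u' identically and the first integrals u'v' = A(u²+v²), u/u' + v/v' = B. Then there exist constants a₁, a₂, b with u(t) = a₁e^{bt} and v(t) = a₂e^{bt}. -/
/-!
The identity `u v' = v u'` says that `u / u'` and `v / v'` agree, so the first integral
`u / u' + v / v' = B` makes both equal to `B / 2`. Hence `u' = (2 / B) u` and `v' = (2 / B) v`,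
and both components are multiples of `exp (2 t / B)`.
-/

/-- Since `x / 0 = 0`, no hypothesis on `a'`, `b'` is needed: `a * b' = b * a'` forces them to
vanish together. -/
theorem div_eq_div_of_mul_eq_mul {K : Type*} [Field K] {a b a' b' : K} (ha : a ≠ 0) (hb : b ≠ 0)
    (h : a * b' = b * a') : a / a' = b / b' := by
  have hinv : a' / a = b' / b := (div_eq_div_iff ha hb).2 (by linear_combination -h)
  rw [← inv_div a', hinv, inv_div]

theorem eq_mul_cexp_of_hasDerivAt {f : ℝ → ℂ} {b : ℂ} (hf : ∀ t, HasDerivAt f (b * f t) t)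
    (t : ℝ) : f t = f 0 * Complex.exp (b * t) := by
  have hg (s : ℝ) : HasDerivAt (fun s : ℝ => f s * Complex.exp (-(b * s))) 0 s := by
    refine ((hf s).fun_mul
      ((hasDerivAt_id s).ofReal_comp.const_mul b).fun_neg.cexp).congr_deriv ?_
    simp only [Complex.ofReal_one, mul_one]
    ring
  have hconst := is_const_of_deriv_eq_zero (fun s => (hg s).differentiableAt)
    (fun s => (hg s).deriv) t 0
  simp only [Complex.ofReal_zero, mul_zero, neg_zero, Complex.exp_zero, mul_one] at hconst
  rw [← hconst, mul_assoc, ← Complex.exp_add, neg_add_cancel, Complex.exp_zero, mul_one]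

theorem eq_mul_cexp_of_div_deriv_eq {f f' : ℝ → ℂ} {c : ℂ}
    (hf : ∀ t, HasDerivAt f (f' t) t) (hf0 : ∀ t, f t ≠ 0) (hc : ∀ t, f t / f' t = c)
    (t : ℝ) :
    f t = f 0 * Complex.exp (c⁻¹ * t) := by
  refine eq_mul_cexp_of_hasDerivAt (fun s => ?_) t
  rw [← hc s, inv_div, div_mul_cancel₀ _ (hf0 s)]
  exact hf s

theorem cliftonPohl_proportional_geodesics_general
    (B : ℂ) (u v u' v' : ℝ → ℂ)
    (hu : ∀ t, HasDerivAt u (u' t) t) (hv : ∀ t, HasDerivAt v (v' t) t)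
    (hune : ∀ t, u t ≠ 0) (hvne : ∀ t, v t ≠ 0)
    (hprop : ∀ t, u t * v' t = v t * u' t)
    (hB : ∀ t, u t / u' t + v t / v' t = B) :
    ∃ a₁ a₂ b : ℂ, ∀ t : ℝ,
      u t = a₁ * Complex.exp (b * t) ∧ v t = a₂ * Complex.exp (b * t) := by
  have hratio (t : ℝ) : u t / u' t = v t / v' t :=
    div_eq_div_of_mul_eq_mul (hune t) (hvne t) (hprop t)
  have hu_half (t : ℝ) : u t / u' t = B / 2 := by linear_combination (hB t + hratio t) / 2
  have hv_half (t : ℝ) : v t / v' t = B / 2 := by linear_combination (hB t - hratio t) / 2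
  exact ⟨u 0, v 0, (B / 2)⁻¹, fun t => ⟨eq_mul_cexp_of_div_deriv_eq hu hune hu_half t,
    eq_mul_cexp_of_div_deriv_eq hv hvne hv_half t⟩⟩

/-- A solution of the Clifton-Pohl geodesic system with `u`, `v` never zero that
satisfies `u·v' = v·u'` identically (and the first integrals `u'v' = A(u²+v²)`,
`u/u' + v/v' = B`) must be of the form `u(t) = a₁e^{bt}`, `v(t) = a₂e^{bt}`. -/
theorem cliftonPohl_proportional_geodesics
    (A B : ℂ) (u v u' v' u'' v'' : ℝ → ℂ)
    (hu : ∀ t, HasDerivAt u (u' t) t) (hv : ∀ t, HasDerivAt v (v' t) t)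
    (hu' : ∀ t, HasDerivAt u' (u'' t) t) (hv' : ∀ t, HasDerivAt v' (v'' t) t)
    (hune : ∀ t, u t ≠ 0) (hvne : ∀ t, v t ≠ 0)
    (geo_u : ∀ t, u'' t = 2 * u t * (u' t) ^ 2 / (u t ^ 2 + v t ^ 2))
    (geo_v : ∀ t, v'' t = 2 * v t * (v' t) ^ 2 / (u t ^ 2 + v t ^ 2))
    (hprop : ∀ t, u t * v' t = v t * u' t)
    (hA : ∀ t, u' t * v' t = A * (u t ^ 2 + v t ^ 2))
    (hB : ∀ t, u t / u' t + v t / v' t = B) :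
    ∃ a₁ a₂ b : ℂ, ∀ t : ℝ,
      u t = a₁ * Complex.exp (b * t) ∧ v t = a₂ * Complex.exp (b * t) :=
  cliftonPohl_proportional_geodesics_general B u v u' v' hu hv hune hvne hprop hB
end
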